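/- arXiv:1112.3239 — 3 statements merged into one kernel-verified Lean document; each statement's English description precedes it below -/
import Mathlib

section
/- Let Σ ⊂ ℝⁿ be the standard simplex with facets E₀,…,Eₙ and inward normals e₀ = −Σeᵢ, e₁,…,eₙ, and boundary measures dσ determined by eₖ ∧ dσ = −dx₁∧⋯∧dxₙ. Then the linear map Ψ : Aff(ℝⁿ,ℝ) → ℝⁿ defined by Ψ(f) = Σₖ (∫_{Eₖ} f dσ) eₖ vanishes on constant functions, and for linear functions f(x) = ⟨a,x⟩ one has Ψ(f) = −vol(Σ)·a, where vol(Σ) = 1/n!. -/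
open MeasureTheory Finset

namespace PsiAux

def SΔ (n : ℕ) (r : ℝ) : Set (Fin n → ℝ) := {y | (∀ j, 0 < y j) ∧ ∑ j, y j < r}

lemma measurableSet_SΔ (n : ℕ) (r : ℝ) : MeasurableSet (SΔ n r) := by
  have h1 : MeasurableSet {y : Fin n → ℝ | ∀ j, 0 < y j} := by
    rw [Set.setOf_forall]
    exact MeasurableSet.iInter fun j =>
      measurableSet_lt measurable_const (measurable_pi_apply j)
  have h2 : MeasurableSet {y : Fin n → ℝ | ∑ j, y j < r} :=
    measurableSet_lt (Finset.measurable_sum _ fun j _ => measurable_pi_apply j) measurable_const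
  exact h1.inter h2

lemma volume_SΔ : ∀ (n : ℕ) (r : ℝ),
    volume (SΔ n r) = if 0 < r then ENNReal.ofReal (r ^ n / n.factorial) else 0 := by
  intro n
  induction n with
  | zero =>
    intro r
    by_cases h : 0 < r
    · rw [if_pos h]
      have he : SΔ 0 r = Set.univ := by
        ext y; simp [SΔ, h]
      rw [he]
      simp [volume_pi, Measure.pi_univ]
    · rw [if_neg h]
      have he : SΔ 0 r = ∅ := by
        ext y; simp [SΔ]; linarith
      rw [he, measure_empty]
  | succ n ih =>
    intro r
    classical
    set T : Set (ℝ × (Fin n → ℝ)) := {p | 0 < p.1 ∧ p.2 ∈ SΔ n (r - p.1)} with hT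
    have hTm : MeasurableSet T := by
      have h1 : MeasurableSet {p : ℝ × (Fin n → ℝ) | 0 < p.1} :=
        measurableSet_lt measurable_const measurable_fst
      have h2 : MeasurableSet {p : ℝ × (Fin n → ℝ) | (∀ j, 0 < p.2 j)} := by
        rw [Set.setOf_forall]
        exact MeasurableSet.iInter fun j =>
          measurableSet_lt measurable_const ((measurable_pi_apply j).comp' measurable_snd)
      have h3 : MeasurableSet {p : ℝ × (Fin n → ℝ) | ∑ j, p.2 j < r - p.1} :=
        measurableSet_lt
          (Finset.measurable_sum _ fun j _ => (measurable_pi_apply j).comp' measurable_snd)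
          (measurable_const.sub measurable_fst)
      exact h1.inter (h2.inter h3)
    have hmp := measurePreserving_piFinSuccAbove (fun _ : Fin (n+1) => (volume : Measure ℝ)) 0
    have hpre : (MeasurableEquiv.piFinSuccAbove (fun _ => ℝ) 0) ⁻¹' T = SΔ (n+1) r := by
      ext x
      simp only [Set.mem_preimage, MeasurableEquiv.piFinSuccAbove_apply, hT, SΔ,
        Set.mem_setOf_eq, Fin.removeNth, Fin.succAbove_zero, Fin.insertNthEquiv, Equiv.coe_fn_symm_mk]
      constructor
      · rintro ⟨h0, hpos, hsum⟩
        refine ⟨Fin.cases h0 hpos, ?_⟩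
        rw [Fin.sum_univ_succ]; linarith
      · rintro ⟨hpos, hsum⟩
        rw [Fin.sum_univ_succ] at hsum
        exact ⟨hpos 0, fun j => hpos _, by linarith⟩
    have hvol : volume (SΔ (n+1) r)
        = ((volume : Measure ℝ).prod (volume : Measure (Fin n → ℝ))) T := by
      rw [← hpre]
      have := hmp.measure_preimage hTm.nullMeasurableSet
      rw [volume_pi]
      convert this using 2 <;> rw [volume_pi]
    rw [hvol, Measure.prod_apply hTm]
    have hslice : ∀ t : ℝ, volume (Prod.mk t ⁻¹' T)
        = (Set.Ioo 0 r).indicator (fun t => ENNReal.ofReal ((r - t)^n / n.factorial)) t := by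
      intro t
      by_cases ht : 0 < t
      · have he : Prod.mk t ⁻¹' T = SΔ n (r - t) := by
          ext y; simp [hT, ht, SΔ]
        rw [he, ih]
        by_cases htr : t < r
        · rw [if_pos (by linarith), Set.indicator_of_mem (Set.mem_Ioo.mpr ⟨ht, htr⟩) _]
        · rw [if_neg (by linarith),
            Set.indicator_of_notMem (fun h => htr (Set.mem_Ioo.mp h).2) _]
      · have he : Prod.mk t ⁻¹' T = ∅ := by
          ext y; simp [hT, ht]
        rw [he, measure_empty,
          Set.indicator_of_notMem (fun h => ht (Set.mem_Ioo.mp h).1) _]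
    simp_rw [hslice]
    rw [lintegral_indicator measurableSet_Ioo]
    by_cases hr : 0 < r
    · rw [if_pos hr]
      have hcont : Continuous fun t : ℝ => (r - t)^n / (n.factorial : ℝ) := by
        fun_prop
      have hint : IntegrableOn (fun t : ℝ => (r - t)^n / (n.factorial : ℝ)) (Set.Ioo 0 r) :=
        (hcont.integrableOn_Icc).mono_set Set.Ioo_subset_Icc_self
      have hnn : 0 ≤ᵐ[volume.restrict (Set.Ioo 0 r)]
          fun t : ℝ => (r - t)^n / (n.factorial : ℝ) := by
        filter_upwards [ae_restrict_mem measurableSet_Ioo] with t ht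
        have h1 : 0 ≤ r - t := by linarith [ht.2]
        positivity
      rw [← ofReal_integral_eq_lintegral_ofReal hint hnn]
      congr 1
      have hfac : (n.factorial : ℝ) ≠ 0 := Nat.cast_ne_zero.2 n.factorial_ne_zero
      rw [← integral_Ioc_eq_integral_Ioo, ← intervalIntegral.integral_of_le hr.le,
        intervalIntegral.integral_div,
        intervalIntegral.integral_comp_sub_left (fun u => u ^ n) r]
      simp only [sub_self, sub_zero, integral_pow, zero_pow (Nat.succ_ne_zero n), sub_zero]
      rw [Nat.factorial_succ]
      push_cast
      field_simp
      try ring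
    · rw [if_neg hr, Set.Ioo_eq_empty hr, Measure.restrict_empty, lintegral_zero_measure]


lemma volume_SΔ_one (n : ℕ) : volume (SΔ n 1) = ENNReal.ofReal (1 / n.factorial) := by
  rw [volume_SΔ n 1, if_pos one_pos, one_pow]

lemma volume_SΔ_one_lt_top (n : ℕ) : volume (SΔ n 1) < ⊤ := by
  rw [volume_SΔ_one]; exact ENNReal.ofReal_lt_top

lemma integral_one_SΔ (n : ℕ) : ∫ _ in SΔ n 1, (1:ℝ) = 1 / n.factorial := by
  rw [setIntegral_const, smul_eq_mul, mul_one, measureReal_def, volume_SΔ_one, ENNReal.toReal_ofReal (by positivity)]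

lemma integrableOn_const_SΔ (n : ℕ) (c : ℝ) : IntegrableOn (fun _ => c) (SΔ n 1) volume :=
  integrableOn_const (volume_SΔ_one_lt_top n).ne

lemma integrableOn_coord (n : ℕ) (j : Fin n) :
    IntegrableOn (fun y => y j) (SΔ n 1) volume := by
  refine Measure.integrableOn_of_bounded (M := 1) (volume_SΔ_one_lt_top n).ne
    (measurable_pi_apply j).aestronglyMeasurable ?_
  filter_upwards [ae_restrict_mem (measurableSet_SΔ n 1)] with y hy
  rcases hy with ⟨hpos, hsum⟩
  have h1 : y j ≤ ∑ k, y k :=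
    Finset.single_le_sum (f := fun k => y k) (fun k _ => (hpos k).le) (Finset.mem_univ j)
  rw [Real.norm_eq_abs, abs_of_pos (hpos j)]
  linarith

lemma sum_update (n : ℕ) (y : Fin n → ℝ) (j : Fin n) (c : ℝ) :
    ∑ k, Function.update y j c k = c + (∑ k, y k - y j) := by
  rw [Finset.sum_update_of_mem (Finset.mem_univ j)]
  congr 1
  rw [Finset.sdiff_singleton_eq_erase, Finset.sum_erase_eq_sub (Finset.mem_univ j)]

lemma integral_reflect (n : ℕ) (j : Fin n) (g : (Fin n → ℝ) → ℝ) :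
    ∫ y in SΔ n 1, g y = ∫ y in SΔ n 1, g (Function.update y j (1 - ∑ k, y k)) := by
  classical
  set ℓ : (Fin n → ℝ) →ₗ[ℝ] (Fin n → ℝ) :=
    LinearMap.pi (fun k => if k = j then -(∑ i, LinearMap.proj i) else LinearMap.proj k) with hℓ
  have hℓ_apply : ∀ (y : Fin n → ℝ) (k), ℓ y k = if k = j then -(∑ i, y i) else y k := by
    intro y k
    rw [hℓ, LinearMap.pi_apply]
    by_cases h : k = j <;> simp [h]
  set T : (Fin n → ℝ) → (Fin n → ℝ) := fun y => ℓ y + Pi.single j 1 with hTdef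
  have hT_apply : ∀ y, T y = Function.update y j (1 - ∑ i, y i) := by
    intro y; funext k
    by_cases h : k = j
    · subst h
      simp [hTdef, hℓ_apply, Function.update_self]
      ring
    · simp [hTdef, hℓ_apply, h, Function.update_of_ne h, Pi.single_eq_of_ne h]
  have hTT : ∀ y, T (T y) = y := by
    intro y
    rw [hT_apply, hT_apply, sum_update]
    funext k
    by_cases h : k = j
    · subst h
      simp only [Function.update_self]
      ring
    · rw [Function.update_of_ne h, Function.update_of_ne h]
  have hinv : ∀ y, ℓ (ℓ y) = y := by
    intro y
    have h1 : T (T y) = ℓ (ℓ y) + ℓ (Pi.single j 1) + Pi.single j 1 := by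
      simp [hTdef, map_add]
      try abel
    have h2 : ℓ (Pi.single j 1) = -Pi.single j 1 := by
      funext k
      rw [hℓ_apply]
      by_cases h : k = j
      · subst h; simp [Finset.sum_pi_single']
      · simp [h, Pi.single_eq_of_ne h]
    have := hTT y
    rw [h1, h2] at this
    simpa using this
  have hcomp : ℓ ∘ₗ ℓ = LinearMap.id := LinearMap.ext hinv
  have hdet : |LinearMap.det ℓ| = 1 := by
    have h1 : LinearMap.det ℓ * LinearMap.det ℓ = 1 := by
      rw [← LinearMap.det_comp, hcomp, LinearMap.det_id]
    rcases mul_self_eq_one_iff.mp h1 with h | h <;> rw [h] <;> norm_num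
  set L : (Fin n → ℝ) →L[ℝ] (Fin n → ℝ) := LinearMap.toContinuousLinearMap ℓ with hL
  have hmaps : ∀ y ∈ SΔ n 1, T y ∈ SΔ n 1 := by
    intro y hy
    rcases hy with ⟨hpos, hsum⟩
    rw [hT_apply]
    constructor
    · intro k
      by_cases h : k = j
      · subst h; rw [Function.update_self]; linarith
      · rw [Function.update_of_ne h]; exact hpos k
    · rw [sum_update]
      have := hpos j
      linarith
  have himg : T '' SΔ n 1 = SΔ n 1 := by
    apply Set.Subset.antisymm
    · rintro _ ⟨y, hy, rfl⟩; exact hmaps y hy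
    · intro y hy
      exact ⟨T y, hmaps y hy, hTT y⟩
  have hInj : Set.InjOn T (SΔ n 1) := by
    intro u _ v _ h
    have := congrArg T h
    rwa [hTT, hTT] at this
  have hder : ∀ x ∈ SΔ n 1, HasFDerivWithinAt T L (SΔ n 1) x := by
    intro x _
    have h0 : HasFDerivAt (fun y => L y + Pi.single j 1) L x :=
      L.hasFDerivAt.add_const _
    have heq : (fun y => L y + Pi.single j (1:ℝ)) = T := by
      funext y
      simp [hTdef, hL, LinearMap.coe_toContinuousLinearMap']
    rw [heq] at h0
    exact h0.hasFDerivWithinAt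
  have hchg := integral_image_eq_integral_abs_det_fderiv_smul volume
    (measurableSet_SΔ n 1) (fun x hx => hder x hx) hInj g
  rw [himg] at hchg
  rw [hchg]
  have hLdet : (L : (Fin n → ℝ) →L[ℝ] (Fin n → ℝ)).det = LinearMap.det ℓ := by
    rw [hL, LinearMap.det_toContinuousLinearMap]
  refine setIntegral_congr_fun (measurableSet_SΔ n 1) ?_
  intro y _
  simp only [hLdet, hdet, one_smul, hT_apply]

lemma integral_coord (n : ℕ) (j : Fin n) :
    ∫ y in SΔ n 1, y j = 1 / (n+1).factorial := by
  classical
  have hkey : ∀ k : Fin n,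
      (∫ y in SΔ n 1, y k) = 1 / n.factorial - ∑ i, ∫ y in SΔ n 1, y i := by
    intro k
    have h1 := integral_reflect n k (fun y => y k)
    simp only [Function.update_self] at h1
    have h2 : ∫ y in SΔ n 1, (1 - ∑ i, y i)
        = 1 / n.factorial - ∑ i, ∫ y in SΔ n 1, y i := by
      rw [integral_sub (integrableOn_const_SΔ n 1)
        (integrable_finset_sum _ (fun i _ => integrableOn_coord n i)),
        integral_finset_sum _ (fun i _ => integrableOn_coord n i), integral_one_SΔ]
    rw [h1, h2]
  have hsum : (∑ i, ∫ y in SΔ n 1, y i)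
      = n * (1 / n.factorial - ∑ i, ∫ y in SΔ n 1, y i) := by
    calc (∑ i, ∫ y in SΔ n 1, y i)
        = ∑ _i : Fin n, (1 / (n.factorial:ℝ) - ∑ i, ∫ y in SΔ n 1, y i) :=
          Finset.sum_congr rfl (fun i _ => hkey i)
      _ = n * (1 / n.factorial - ∑ i, ∫ y in SΔ n 1, y i) := by
          rw [Finset.sum_const, Finset.card_univ, Fintype.card_fin, nsmul_eq_mul]
  rw [hkey j]
  have hfac : ((n+1).factorial : ℝ) = (n + 1) * n.factorial := by
    rw [Nat.factorial_succ]; push_cast; ring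
  have h1 : (n.factorial : ℝ) ≠ 0 := Nat.cast_ne_zero.2 n.factorial_ne_zero
  have h2 : ((n+1).factorial : ℝ) ≠ 0 := Nat.cast_ne_zero.2 (n+1).factorial_ne_zero
  have hkey2 : ((n:ℝ) + 1) * (1 / n.factorial - ∑ i, ∫ y in SΔ n 1, y i)
      = 1 / n.factorial := by
    linear_combination -hsum
  rw [eq_div_iff h2, hfac]
  calc (1 / (n.factorial:ℝ) - ∑ i, ∫ y in SΔ n 1, y i) * (((n:ℝ) + 1) * n.factorial)
      = (((n:ℝ) + 1) * (1 / n.factorial - ∑ i, ∫ y in SΔ n 1, y i)) * n.factorial := by ring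
    _ = (1 / (n.factorial:ℝ)) * n.factorial := by rw [hkey2]
    _ = 1 := by field_simp

lemma integrableOn_linear (n : ℕ) (b : Fin n → ℝ) :
    IntegrableOn (fun y => ∑ j, b j * y j) (SΔ n 1) volume :=
  integrable_finset_sum _ (fun j _ => (integrableOn_coord n j).const_mul (b j))

lemma integral_linear (n : ℕ) (b : Fin n → ℝ) :
    ∫ y in SΔ n 1, (∑ j, b j * y j) = (∑ j, b j) / (n+1).factorial := by
  rw [integral_finset_sum _ (fun j _ => (integrableOn_coord n j).const_mul (b j))]
  calc ∑ j, ∫ y in SΔ n 1, b j * y j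
      = ∑ j, b j * (1 / (n+1).factorial) := by
        refine Finset.sum_congr rfl (fun j _ => ?_)
        rw [integral_const_mul, integral_coord]
    _ = (∑ j, b j) / (n+1).factorial := by
        rw [← Finset.sum_mul]; ring

lemma integral_one_sub (n : ℕ) :
    ∫ y in SΔ n 1, (1 - ∑ j, y j) = 1 / (n+1).factorial := by
  rw [integral_sub (integrableOn_const_SΔ n 1)
    (integrable_finset_sum _ fun j _ => integrableOn_coord n j), integral_one_SΔ,
    integral_finset_sum _ (fun j _ => integrableOn_coord n j)]
  have h : ∀ j : Fin n, (∫ y in SΔ n 1, y j) = 1 / (n+1).factorial :=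
    fun j => integral_coord n j
  rw [Finset.sum_congr rfl (fun j _ => h j), Finset.sum_const, Finset.card_univ,
    Fintype.card_fin, nsmul_eq_mul]
  have h1 : (n.factorial : ℝ) ≠ 0 := Nat.cast_ne_zero.2 n.factorial_ne_zero
  have hn1 : ((n:ℝ) + 1) ≠ 0 := by positivity
  rw [Nat.factorial_succ]
  push_cast
  field_simp
  try ring

end PsiAux

open PsiAux in
/-- For the standard simplex `Σ ⊂ ℝ^{n+1}` with facets `E₀,…,E_{n+1}` and inward normals
`e₀ = -∑ eᵢ, e₁,…,e_{n+1}`, the map `Ψ(f) = ∑ₖ (∫_{Eₖ} f dσ) eₖ` (facet integrals taken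
via the standard parametrizations by the `n`-dimensional simplex `Δ`) vanishes on constants,
and on linear functions `f = ⟨a,·⟩` equals `-vol(Σ) • a = -(1/(n+1)!) • a`. -/
theorem Psi_simplex (n : ℕ)
    (Δ : Set (Fin n → ℝ)) (hΔ : Δ = {y | (∀ j, 0 < y j) ∧ ∑ j, y j < 1})
    (e0 : Fin (n + 1) → ℝ) (he0 : e0 = -∑ i : Fin (n + 1), Pi.single i 1)
    (Ψ : ((Fin (n + 1) → ℝ) → ℝ) → (Fin (n + 1) → ℝ))
    (hΨ : ∀ f, Ψ f = (∫ y in Δ, f (Fin.snoc y (1 - ∑ j, y j))) • e0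
        + ∑ i : Fin (n + 1),
            (∫ y in Δ, f (i.insertNth 0 y)) • (Pi.single i 1 : Fin (n + 1) → ℝ)) :
    (∀ c : ℝ, Ψ (fun _ => c) = 0) ∧
    (∀ a : Fin (n + 1) → ℝ,
      Ψ (fun x => ∑ i, a i * x i) = (-(1 / (n + 1).factorial : ℝ)) • a) := by
  have hset : Δ = SΔ n 1 := hΔ
  rw [hset] at hΨ
  constructor
  · intro c
    rw [hΨ]
    simp only [setIntegral_const, smul_eq_mul]
    rw [← Finset.smul_sum, he0, smul_neg, neg_add_cancel]
  · intro a
    rw [hΨ]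
    set F : ℝ := ((n+1).factorial : ℝ) with hF
    have hA : (∫ y in SΔ n 1, ∑ i : Fin (n+1), a i * (Fin.snoc y (1 - ∑ j, y j) : Fin (n+1) → ℝ) i)
        = (∑ i, a i) * (1 / F) := by
      have hrw : (fun y : Fin n → ℝ => ∑ i : Fin (n+1), a i * (Fin.snoc y (1 - ∑ j, y j) : Fin (n+1) → ℝ) i)
          = fun y => (∑ j : Fin n, a j.castSucc * y j)
              + a (Fin.last n) * (1 - ∑ j, y j) := by
        funext y
        rw [Fin.sum_univ_castSucc]
        simp [Fin.snoc_castSucc, Fin.snoc_last]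
      have h2 : IntegrableOn (fun y : Fin n → ℝ => a (Fin.last n) * (1 - ∑ j, y j))
          (SΔ n 1) volume :=
        Integrable.const_mul ((integrableOn_const_SΔ n 1).sub
          (integrable_finset_sum _ fun j _ => integrableOn_coord n j)) _
      rw [hrw, integral_add (integrableOn_linear n _) h2,
        integral_linear, integral_const_mul, integral_one_sub, Fin.sum_univ_castSucc]
      rw [← hF]
      ring
    have hB : ∀ i : Fin (n+1),
        (∫ y in SΔ n 1, ∑ k : Fin (n+1), a k * (i.insertNth 0 y : Fin (n+1) → ℝ) k)
        = (∑ k, a k - a i) * (1 / F) := by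
      intro i
      have hrw : (fun y : Fin n → ℝ => ∑ k : Fin (n+1), a k * (i.insertNth 0 y : Fin (n+1) → ℝ) k)
          = fun y => ∑ j : Fin n, a (i.succAbove j) * y j := by
        funext y
        rw [Fin.sum_univ_succAbove _ i]
        simp [Fin.insertNth_apply_same, Fin.insertNth_apply_succAbove]
      rw [hrw, integral_linear, ← hF]
      have hsa : ∑ j : Fin n, a (i.succAbove j) = ∑ k, a k - a i := by
        rw [Fin.sum_univ_succAbove a i]; ring
      rw [hsa]
      ring
    rw [hA]
    simp only [hB]
    rw [he0]
    funext k
    simp only [Pi.add_apply, Pi.smul_apply, Pi.neg_apply, Finset.sum_apply,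
      smul_eq_mul, Pi.single_apply, mul_ite, mul_one, mul_zero, Finset.sum_ite_eq,
      Finset.mem_univ, if_true]
    ring
end

section
/- Let P ⊂ ℝⁿ be a compact convex simple polytope with inward normals ν and defining functions L₁,…,L_d. The map (λ,p) ↦ {λν₁/L₁(p), …, λν_d/L_d(p)} from ℝ_{>0} × P parametrizes exactly the sets of inward normals ν' for P such that (P,ν') is monotone, i.e., such that the defining functions L'ₖ with dL'ₖ = ν'ₖ can be chosen to all take a common value at some common point of P. In particular the monotone labellings form an (n+1)-dimensional cone. -/
open MeasureTheory

/-- For a compact convex simple polytope `P` with reference normals `ν` and defining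
functions `Lₖ`, a rescaled labelling `ν'ₖ = tₖ • νₖ` (with defining functions `tₖ·Lₖ`) is
monotone — i.e. its defining functions all agree at some point of `P` — if and only if it is
of the form `ν'ₖ = (λ / Lₖ(p)) • νₖ` for some `λ > 0` and `p ∈ P`.  Thus the monotone
labellings form the image of the `(n+1)`-dimensional cone `ℝ_{>0} × P`. -/
theorem monotone_labellings_parametrization (n d : ℕ)
    (ν : Fin d → EuclideanSpace ℝ (Fin n)) (c : Fin d → ℝ) (hν : ∀ k, ν k ≠ 0)
    (L : Fin d → EuclideanSpace ℝ (Fin n) → ℝ)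
    (hL : ∀ k x, L k x = (inner ℝ (ν k) x : ℝ) + c k)
    (P : Set (EuclideanSpace ℝ (Fin n)))
    (hP : P = {x | ∀ k, 0 < L k x})
    (hbdd : Bornology.IsBounded P) (hne : P.Nonempty)
    (hsimple : ∀ x ∈ closure P, ({k | L k x = 0} : Set (Fin d)).ncard ≤ n)
    (t : Fin d → ℝ) (ht : ∀ k, 0 < t k) :
    (∃ p ∈ P, ∀ k l, t k * L k p = t l * L l p) ↔
      ∃ lam > (0 : ℝ), ∃ p ∈ P, ∀ k, t k • ν k = (lam / L k p) • ν k := by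
  constructor
  · rintro ⟨p, hp, heq⟩
    have hLpos : ∀ k, 0 < L k p := by rw [hP] at hp; exact hp
    rcases isEmpty_or_nonempty (Fin d) with h | ⟨⟨k0⟩⟩
    · exact ⟨1, one_pos, p, hp, fun k => (h.elim k)⟩
    · refine ⟨t k0 * L k0 p, mul_pos (ht k0) (hLpos k0), p, hp, fun k => ?_⟩
      have hk : t k = (t k0 * L k0 p) / L k p := by
        rw [eq_div_iff (hLpos k).ne']
        exact heq k k0
      rw [← hk]
  · rintro ⟨lam, hlam, p, hp, heq⟩
    have hLpos : ∀ k, 0 < L k p := by rw [hP] at hp; exact hp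
    refine ⟨p, hp, fun k l => ?_⟩
    have hk : t k = lam / L k p := smul_left_injective ℝ (hν k) (heq k)
    have hl : t l = lam / L l p := smul_left_injective ℝ (hν l) (heq l)
    rw [hk, hl, div_mul_cancel₀ _ (hLpos k).ne', div_mul_cancel₀ _ (hLpos l).ne']
end

section
/- Let P ⊂ ℝⁿ be a polytope whose vertices lie in a lattice Λ* ⊂ ℝⁿ, and suppose (P,ν) is monotone with preferred point p_ν and has constant extremal affine function, where after translation p_ν = 0 and the defining functions are Lₗ(x) = ⟨νₗ,x⟩ + 1. If each facet of P contains a subset of vertices forming a real basis of ℝⁿ, then ⟨νₗ,q⟩ ∈ ℚ for every q ∈ Λ* and every l, and consequently there is a positive integer m with mνₗ in the dual lattice of Λ* for all l. -/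
open MeasureTheory

/-- Let `P ⊂ ℝⁿ` be a polytope whose vertices lie in a lattice `Λ*`, monotone with
preferred point `0` and defining functions `Lₗ(x) = ⟨νₗ,x⟩ + 1`.  If each facet contains a
subset of vertices forming a real basis of `ℝⁿ`, then `⟨νₗ,q⟩ ∈ ℚ` for every `q ∈ Λ*` and
every `l`, and consequently there is a positive integer `m` with `m·νₗ` in the dual lattice
of `Λ*` for all `l`. -/
theorem normals_rational_of_lattice_vertices (n d : ℕ)
    (ν : Fin d → EuclideanSpace ℝ (Fin n)) (hν : ∀ l, ν l ≠ 0)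
    (L : Fin d → EuclideanSpace ℝ (Fin n) → ℝ)
    (hL : ∀ l x, L l x = (inner ℝ (ν l) x : ℝ) + 1)
    (P : Set (EuclideanSpace ℝ (Fin n)))
    (hP : P = {x | ∀ l, 0 < L l x})
    (hbdd : Bornology.IsBounded P) (hne : P.Nonempty)
    (F : Fin d → Set (EuclideanSpace ℝ (Fin n)))
    (hF : ∀ l, F l = {x ∈ closure P | L l x = 0})
    (Λs : AddSubgroup (EuclideanSpace ℝ (Fin n)))
    (hdisc : DiscreteTopology Λs)
    (hspan : Submodule.span ℝ (Λs : Set (EuclideanSpace ℝ (Fin n))) = ⊤)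
    (hvert : Set.extremePoints ℝ (closure P) ⊆ Λs)
    (hbasis : ∀ l, ∃ v : Fin n → EuclideanSpace ℝ (Fin n),
      (∀ i, v i ∈ Set.extremePoints ℝ (closure P) ∧ v i ∈ F l) ∧
      Submodule.span ℝ (Set.range v) = ⊤) :
    (∀ l, ∀ q ∈ Λs, ∃ s : ℚ, (inner ℝ (ν l) q : ℝ) = (s : ℝ)) ∧
    (∃ m : ℕ, 0 < m ∧ ∀ l, ∀ q ∈ Λs, ∃ z : ℤ,
      (m : ℝ) * (inner ℝ (ν l) q : ℝ) = (z : ℝ)) := by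
  classical
  -- Set up the ℤ-lattice structure
  let Λ : Submodule ℤ (EuclideanSpace ℝ (Fin n)) := AddSubgroup.toIntSubmodule Λs
  haveI : DiscreteTopology Λ := hdisc
  haveI : IsZLattice ℝ Λ := ⟨by rwa [AddSubgroup.coe_toIntSubmodule]⟩
  haveI := ZLattice.module_free ℝ Λ
  haveI := ZLattice.module_finite ℝ Λ
  have hrk := ZLattice.rank ℝ Λ
  let b : Module.Basis (Module.Free.ChooseBasisIndex ℤ Λ) ℤ Λ := Module.Free.chooseBasis ℤ Λ
  let B : Module.Basis (Module.Free.ChooseBasisIndex ℤ Λ) ℝ (EuclideanSpace ℝ (Fin n)) :=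
    Module.Basis.ofZLatticeBasis ℝ Λ b
  have hcard : Fintype.card (Module.Free.ChooseBasisIndex ℤ Λ) = n := by
    rw [← Module.finrank_eq_card_chooseBasisIndex, hrk, finrank_euclideanSpace_fin]
  -- Every lattice point is in the ℤ-span of B
  have hmemB : ∀ q ∈ Λs, q ∈ Submodule.span ℤ (Set.range (B : _ → EuclideanSpace ℝ (Fin n))) := by
    intro q hq
    have h1 : (⟨q, hq⟩ : Λ) ∈ Submodule.span ℤ (Set.range (b : _ → Λ)) := by
      rw [b.span_eq]; trivial
    have h2 := Submodule.mem_map_of_mem (f := Λ.subtype) h1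
    rw [Submodule.map_span, ← Set.range_comp] at h2
    have h3 : (Λ.subtype ∘ (b : _ → Λ)) = (B : _ → EuclideanSpace ℝ (Fin n)) := by
      funext j
      simp [Function.comp, B, Module.Basis.ofZLatticeBasis_apply]
    rwa [h3] at h2
  -- core rationality: inner (ν l) (B j) is rational
  have hcore : ∀ l j, ∃ s : ℚ, (inner ℝ (ν l) (B j) : ℝ) = (s : ℝ) := by
    intro l
    obtain ⟨v, hv1, hv2⟩ := hbasis l
    have hinner : ∀ i, (inner ℝ (ν l) (v i) : ℝ) = -1 := by
      intro i
      have hmem := (hv1 i).2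
      rw [hF l] at hmem
      have h0 : L l (v i) = 0 := hmem.2
      rw [hL l (v i)] at h0
      linarith
    have hle : ⊤ ≤ Submodule.span ℝ (Set.range v) := hv2.ge
    have hcard' : Fintype.card (Fin n) = Module.finrank ℝ (EuclideanSpace ℝ (Fin n)) := by
      rw [finrank_euclideanSpace_fin, Fintype.card_fin]
    have hliR : LinearIndependent ℝ v := by
      have := (basisOfTopLeSpanOfCardEqFinrank v hle hcard').linearIndependent
      rwa [coe_basisOfTopLeSpanOfCardEqFinrank v hle hcard'] at this
    have hinj : Function.Injective (fun r : ℚ => r • (1 : ℝ)) := by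
      intro a b hab
      simp only [Rat.smul_one_eq_cast] at hab
      exact_mod_cast hab
    have hliQ : LinearIndependent ℚ v := hliR.restrict_scalars hinj
    have hliQB : LinearIndependent ℚ (B : _ → EuclideanSpace ℝ (Fin n)) :=
      B.linearIndependent.restrict_scalars hinj
    have hsub : Submodule.span ℚ (Set.range v) ≤
        Submodule.span ℚ (Set.range (B : _ → EuclideanSpace ℝ (Fin n))) := by
      rw [Submodule.span_le]
      rintro x ⟨i, rfl⟩
      exact Submodule.span_subset_span ℤ ℚ _ (hmemB _ (hvert (hv1 i).1))
    haveI : FiniteDimensional ℚ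
        (Submodule.span ℚ (Set.range (B : _ → EuclideanSpace ℝ (Fin n)))) :=
      FiniteDimensional.span_of_finite ℚ (Set.finite_range _)
    have heq : Submodule.span ℚ (Set.range v) =
        Submodule.span ℚ (Set.range (B : _ → EuclideanSpace ℝ (Fin n))) := by
      apply Submodule.eq_of_le_of_finrank_le hsub
      rw [finrank_span_eq_card hliQ, finrank_span_eq_card hliQB, hcard, Fintype.card_fin]
    intro j
    let f : EuclideanSpace ℝ (Fin n) →ₗ[ℚ] ℝ :=
      ((innerSL ℝ (ν l)).toLinearMap).restrictScalars ℚ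
    have hfx : ∀ x, f x = (inner ℝ (ν l) x : ℝ) := fun x => rfl
    have hBj : (B j : EuclideanSpace ℝ (Fin n)) ∈ Submodule.span ℚ (Set.range v) := by
      rw [heq]
      exact Submodule.subset_span ⟨j, rfl⟩
    have hS : Submodule.span ℚ (Set.range v) ≤
        (Submodule.span ℚ ({(1 : ℝ)} : Set ℝ)).comap f := by
      rw [Submodule.span_le]
      rintro x ⟨i, rfl⟩
      refine SetLike.mem_coe.mpr (Submodule.mem_comap.mpr ?_)
      rw [Submodule.mem_span_singleton]
      exact ⟨-1, by rw [Rat.smul_one_eq_cast, hfx, hinner i]; norm_num⟩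
    have h4 := Submodule.mem_span_singleton.mp (Submodule.mem_comap.mp (hS hBj))
    obtain ⟨a, ha⟩ := h4
    refine ⟨a, ?_⟩
    rw [← hfx, ← ha, Rat.smul_one_eq_cast]
  -- choose the rationals and a common denominator
  choose s hs using hcore
  set m : ℕ := ∏ l : Fin d, ∏ j, (s l j).den with hm
  have hmpos : 0 < m := by
    apply Finset.prod_pos
    intro l _
    apply Finset.prod_pos
    intro j _
    exact (s l j).pos
  have hden : ∀ l j, ((s l j).den : ℤ) ∣ (m : ℤ) := by
    intro l j
    apply Int.natCast_dvd_natCast.mpr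
    calc (s l j).den ∣ ∏ j', (s l j').den :=
          Finset.dvd_prod_of_mem _ (Finset.mem_univ j)
      _ ∣ m := Finset.dvd_prod_of_mem (fun l' => ∏ j', (s l' j').den) (Finset.mem_univ l)
  -- part 2
  have hpart2 : ∀ l, ∀ q ∈ Λs, ∃ z : ℤ, (m : ℝ) * (inner ℝ (ν l) q : ℝ) = (z : ℝ) := by
    intro l q hq
    let g : EuclideanSpace ℝ (Fin n) →ₗ[ℤ] ℝ :=
      ((m : ℝ) • (innerSL ℝ (ν l)).toLinearMap).restrictScalars ℤ
    have hgx : ∀ x, g x = (m : ℝ) * (inner ℝ (ν l) x : ℝ) := fun x => rfl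
    have hT : Submodule.span ℤ (Set.range (B : _ → EuclideanSpace ℝ (Fin n))) ≤
        (Submodule.span ℤ ({(1 : ℝ)} : Set ℝ)).comap g := by
      rw [Submodule.span_le]
      rintro x ⟨j, rfl⟩
      refine SetLike.mem_coe.mpr (Submodule.mem_comap.mpr ?_)
      rw [Submodule.mem_span_singleton]
      obtain ⟨k, hk⟩ := hden l j
      refine ⟨k * (s l j).num, ?_⟩
      rw [Int.smul_one_eq_cast, hgx, hs l j]
      have key : ((m : ℤ) : ℚ) * s l j = ((k * (s l j).num : ℤ) : ℚ) := by
        rw [hk]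
        push_cast
        linear_combination (k : ℚ) * Rat.mul_den_eq_num (s l j)
      calc ((k * (s l j).num : ℤ) : ℝ) = ((((m : ℤ) : ℚ) * s l j : ℚ) : ℝ) := by rw [key]; norm_cast
        _ = (m : ℝ) * ((s l j : ℚ) : ℝ) := by push_cast; ring
    have h5 := Submodule.mem_span_singleton.mp (Submodule.mem_comap.mp (hT (hmemB q hq)))
    obtain ⟨z, hz⟩ := h5
    refine ⟨z, ?_⟩
    rw [← hgx, ← hz, Int.smul_one_eq_cast]
  refine ⟨?_, ⟨m, hmpos, hpart2⟩⟩
  -- part 1 from part 2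
  intro l q hq
  obtain ⟨z, hz⟩ := hpart2 l q hq
  refine ⟨(z : ℚ) / (m : ℚ), ?_⟩
  have hm0 : (m : ℝ) ≠ 0 := by positivity
  have hcast : (((z : ℚ) / (m : ℚ) : ℚ) : ℝ) = (z : ℝ) / (m : ℝ) := by push_cast; ring
  rw [hcast, eq_div_iff hm0, mul_comm]
  exact hz
end
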